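/- (Hölder-type inequality for the σ-norm pairing) Let σ be a spectral function, Y ∈ L_σ and Z ∈ L¹ with ‖Z‖_σ* < ∞. Then |E[Y·Z]| ≤ ‖Y‖_σ · ‖Z‖_σ*, where ‖Y‖_σ = ∫₀¹ σ(u) F_{|Y|}^{-1}(u) du and ‖Z‖_σ* = inf{η ≥ 0 : ∫_α¹ F_{|Z|}^{-1}(u) du ≤ η ∫_α¹ σ(u) du for all α ∈ [0,1)}. -/

import Mathlib

/-!
On `(0, 1)` with Lebesgue measure, the quantile function `q_X = F_X⁻¹` of `X ≥ 0` has the same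
tail probabilities as `X`, and its upper level sets `{q_X > t} = (F_X(t), 1)` are nested
intervals. Writing `E[XY] = ∫∫ P(X > s, Y > t) ds dt` (layer cake twice) and using
`P(A ∩ B) ≤ min(P A, P B)`, with equality for nested intervals, gives the Hardy–Littlewood
inequality `E|YZ| ≤ ∫₀¹ q_{|Y|} q_{|Z|}`. One more layer cake, in `q_{|Y|}` alone, is the
integration by parts `∫₀¹ q_{|Y|} w = ∫₀^∞ ∫_{F_{|Y|}(t)}^1 w du dt`, so the tail inequalities
`∫_α¹ q_{|Z|} ≤ η ∫_α¹ σ` bound `∫₀¹ q_{|Y|} q_{|Z|}` by `η ‖Y‖_σ`; take the infimum over `η`.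
-/

open MeasureTheory ENNReal

/-- The (left-continuous) quantile function of X: F_X^{-1}(p) = inf{y : P(X ≤ y) ≥ p}. -/
noncomputable def quantile {Ω : Type*} [MeasurableSpace Ω] (μ : Measure Ω)
    (X : Ω → ℝ) (p : ℝ) : ℝ :=
  sInf {y : ℝ | p ≤ (μ {ω | X ω ≤ y}).toReal}

/-- The σ-norm ‖Y‖_σ = ∫₀¹ σ(u)·F_{|Y|}^{-1}(u) du, valued in [0,∞]. -/
noncomputable def sigmaNorm {Ω : Type*} [MeasurableSpace Ω] (μ : Measure Ω)
    (σ : ℝ → ℝ) (Y : Ω → ℝ) : ℝ≥0∞ :=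
  ∫⁻ u in Set.Ioo (0 : ℝ) 1, ENNReal.ofReal (σ u * quantile μ (fun ω => |Y ω|) u)

/-- The Average Value-at-Risk at level α. -/
noncomputable def avar {Ω : Type*} [MeasurableSpace Ω] (μ : Measure Ω)
    (X : Ω → ℝ) (α : ℝ) : ℝ :=
  (1 - α)⁻¹ * ∫ u in α..1, quantile μ X u

/-- The dual σ-norm ‖Z‖_σ* = inf{η ≥ 0 : ∫_α¹ F_{|Z|}^{-1} ≤ η ∫_α¹ σ for all α ∈ [0,1)}. -/
noncomputable def sigmaDualNorm {Ω : Type*} [MeasurableSpace Ω] (μ : Measure Ω)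
    (σ : ℝ → ℝ) (Z : Ω → ℝ) : ℝ :=
  sInf {η : ℝ | 0 ≤ η ∧ ∀ α ∈ Set.Ico (0 : ℝ) 1,
    (∫ u in α..1, quantile μ (fun ω => |Z ω|) u) ≤ η * ∫ u in α..1, σ u}

open Set Filter Topology ProbabilityTheory
open scoped Pointwise

theorem ProbabilityTheory.sInf_le_cdf_iff (ν : Measure ℝ) [IsProbabilityMeasure ν] {p : ℝ}
    (hp : p ∈ Ioo 0 1) (t : ℝ) : sInf {y | p ≤ cdf ν y} ≤ t ↔ p ≤ cdf ν t := by
  have hne : {y | p ≤ cdf ν y}.Nonempty :=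
    ((tendsto_cdf_atTop ν).eventually (eventually_ge_nhds hp.2)).exists
  have hbdd : BddBelow {y | p ≤ cdf ν y} := by
    obtain ⟨y₀, hy₀⟩ :=
      eventually_atBot.1 ((tendsto_cdf_atBot ν).eventually (eventually_lt_nhds hp.1))
    exact ⟨y₀, fun y hy => le_of_not_ge fun h => (hy₀ y h).not_ge hy⟩
  refine ⟨fun h => ?_, fun h => csInf_le hbdd h⟩
  -- right continuity of the cdf puts the infimum in the set
  have hmem : p ≤ cdf ν (sInf {y | p ≤ cdf ν y}) := by
    refine ge_of_tendsto (((cdf ν).right_continuous _).mono Ioi_subset_Ici_self).tendsto ?_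
    filter_upwards [self_mem_nhdsWithin] with y hy
    obtain ⟨z, hz, hzy⟩ := exists_lt_of_csInf_lt hne hy
    exact hz.trans ((cdf ν).mono hzy.le)
  exact hmem.trans ((cdf ν).mono h)

section Quantile

variable {Ω : Type*} [MeasurableSpace Ω] {μ : Measure Ω} [IsProbabilityMeasure μ]
  {X : Ω → ℝ}

theorem toReal_measure_le_eq_cdf_map (hX : Measurable X) (t : ℝ) :
    (μ {ω | X ω ≤ t}).toReal = cdf (μ.map X) t := by
  have := Measure.isProbabilityMeasure_map (μ := μ) hX.aemeasurable
  rw [cdf_eq_real, measureReal_def, Measure.map_apply hX measurableSet_Iic]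
  rfl

theorem quantile_le_iff (hX : Measurable X) {u : ℝ} (hu : u ∈ Ioo 0 1) (t : ℝ) :
    quantile μ X u ≤ t ↔ u ≤ (μ {ω | X ω ≤ t}).toReal := by
  have := Measure.isProbabilityMeasure_map (μ := μ) hX.aemeasurable
  simp only [quantile, toReal_measure_le_eq_cdf_map hX]
  exact sInf_le_cdf_iff _ hu t

theorem monotoneOn_quantile (hX : Measurable X) : MonotoneOn (quantile μ X) (Ioo 0 1) :=
  fun _ hu _ hv huv => (quantile_le_iff hX hu _).2 <|
    huv.trans ((quantile_le_iff hX hv _).1 le_rfl)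

theorem quantile_nonneg (hX : Measurable X) (hX0 : 0 ≤ X) {u : ℝ} (hu : u ∈ Ioo 0 1) :
    0 ≤ quantile μ X u := by
  refine le_of_forall_lt fun t ht => lt_of_not_ge fun h => ?_
  have hempty : {ω | X ω ≤ t} = ∅ :=
    eq_empty_of_forall_notMem fun ω hω => (ht.trans_le (hX0 ω)).not_ge hω
  simpa [hempty] using hu.1.trans_le ((quantile_le_iff hX hu t).1 h)

theorem quantile_tail (hX : Measurable X) (t : ℝ) :
    {u | t < quantile μ X u} ∩ Ioo 0 1 = Ioo (μ {ω | X ω ≤ t}).toReal 1 := by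
  ext u
  by_cases hu : u ∈ Ioo 0 1
  · simp [hu, hu.2, ← not_le, quantile_le_iff hX hu]
  · simp only [mem_inter_iff, hu, and_false, false_iff]
    exact fun h => hu ⟨toReal_nonneg.trans_lt h.1, h.2⟩

theorem volume_Ioo_measure_le (hX : Measurable X) (t : ℝ) :
    volume (Ioo (μ {ω | X ω ≤ t}).toReal 1) = μ {ω | t < X ω} := by
  have hcompl : {ω | t < X ω} = {ω | X ω ≤ t}ᶜ := by ext; simp
  rw [Real.volume_Ioo, hcompl, prob_compl_eq_one_sub (measurableSet_le hX measurable_const),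
    ENNReal.ofReal_sub _ toReal_nonneg, ofReal_one, ofReal_toReal (measure_ne_top _ _)]

theorem restrict_Ioo_quantile_tail (hX : Measurable X) (t : ℝ) :
    volume.restrict (Ioo 0 1) {u | t < quantile μ X u} = μ {ω | t < X ω} := by
  rw [Measure.restrict_apply' measurableSet_Ioo, quantile_tail hX, volume_Ioo_measure_le hX]

end Quantile

section LayerCake

variable {α : Type*} [MeasurableSpace α] {μ : Measure α} [SFinite μ] {f g : α → ℝ}

theorem lintegral_ofReal_mul_eq_lintegral_setLIntegral {w : α → ℝ≥0∞} (hf0 : 0 ≤ᵐ[μ] f)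
    (hf : AEMeasurable f μ) (hw : AEMeasurable w μ) :
    ∫⁻ a, ENNReal.ofReal (f a) * w a ∂μ = ∫⁻ t in Ioi 0, ∫⁻ a in {a | t < f a}, w a ∂μ := by
  have hac := withDensity_absolutelyContinuous μ w
  calc ∫⁻ a, ENNReal.ofReal (f a) * w a ∂μ = ∫⁻ a, ENNReal.ofReal (f a) ∂μ.withDensity w := by
        rw [lintegral_withDensity_eq_lintegral_mul₀ hw hf.ennreal_ofReal]
        exact lintegral_congr fun a => mul_comm _ _
    _ = _ := by
        rw [lintegral_eq_lintegral_meas_lt _ (hac.ae_le hf0) (hf.mono_ac hac)]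
        simp_rw [withDensity_apply']

theorem lintegral_ofReal_mul_ofReal_eq (hf0 : 0 ≤ᵐ[μ] f) (hf : AEMeasurable f μ)
    (hg0 : 0 ≤ᵐ[μ] g) (hg : AEMeasurable g μ) :
    ∫⁻ a, ENNReal.ofReal (f a) * ENNReal.ofReal (g a) ∂μ =
      ∫⁻ s in Ioi 0, ∫⁻ t in Ioi 0, μ ({a | t < g a} ∩ {a | s < f a}) := by
  rw [lintegral_ofReal_mul_eq_lintegral_setLIntegral hf0 hf hg.ennreal_ofReal]
  refine lintegral_congr fun s => ?_
  rw [lintegral_eq_lintegral_meas_lt _ (ae_restrict_of_ae hg0) hg.restrict]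
  refine lintegral_congr fun t => ?_
  exact Measure.restrict_apply₀ (nullMeasurableSet_lt aemeasurable_const hg.restrict)

end LayerCake

section Rearrangement

variable {Ω : Type*} [MeasurableSpace Ω] {μ : Measure Ω} [IsProbabilityMeasure μ]
  {X Y : Ω → ℝ}

theorem aemeasurable_quantile (hX : Measurable X) :
    AEMeasurable (quantile μ X) (volume.restrict (Ioo 0 1)) :=
  aemeasurable_restrict_of_monotoneOn measurableSet_Ioo (monotoneOn_quantile hX)

theorem quantile_nonneg_ae (hX : Measurable X) (hX0 : 0 ≤ X) :
    0 ≤ᵐ[volume.restrict (Ioo 0 1)] quantile μ X :=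
  ae_restrict_of_forall_mem measurableSet_Ioo fun _ hu => quantile_nonneg hX hX0 hu

theorem lintegral_quantile (hX : Measurable X) (hX0 : 0 ≤ X) :
    ∫⁻ u in Ioo 0 1, ENNReal.ofReal (quantile μ X u) = ∫⁻ ω, ENNReal.ofReal (X ω) ∂μ := by
  rw [lintegral_eq_lintegral_meas_lt _ (quantile_nonneg_ae hX hX0) (aemeasurable_quantile hX),
    lintegral_eq_lintegral_meas_lt _ (ae_of_all _ hX0) hX.aemeasurable]
  simp_rw [restrict_Ioo_quantile_tail hX]

theorem integrableOn_quantile (hX : Measurable X) (hX0 : 0 ≤ X) (hXi : Integrable X μ) :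
    IntegrableOn (quantile μ X) (Ioo 0 1) :=
  ⟨(aemeasurable_quantile hX).aestronglyMeasurable,
    (hasFiniteIntegral_iff_ofReal (quantile_nonneg_ae hX hX0)).2 <|
      (lintegral_quantile hX hX0).trans_lt hXi.lintegral_lt_top⟩

theorem measure_inter_le_restrict_quantile_inter (hX : Measurable X) (hY : Measurable Y)
    (s t : ℝ) :
    μ ({ω | t < Y ω} ∩ {ω | s < X ω}) ≤
      volume.restrict (Ioo 0 1) ({u | t < quantile μ Y u} ∩ {u | s < quantile μ X u}) := by
  rw [Measure.restrict_apply' measurableSet_Ioo, inter_inter_distrib_right, quantile_tail hX,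
    quantile_tail hY]
  -- the two tail intervals of `(0, 1)` are nested
  rcases le_total (μ {ω | Y ω ≤ t}).toReal (μ {ω | X ω ≤ s}).toReal with h | h
  · rw [inter_eq_right.2 (Ioo_subset_Ioo_left h), volume_Ioo_measure_le hX]
    exact measure_mono inter_subset_right
  · rw [inter_eq_left.2 (Ioo_subset_Ioo_left h), volume_Ioo_measure_le hY]
    exact measure_mono inter_subset_left

theorem lintegral_mul_le_lintegral_quantile_mul (hX : Measurable X) (hX0 : 0 ≤ X)
    (hY : Measurable Y) (hY0 : 0 ≤ Y) :
    ∫⁻ ω, ENNReal.ofReal (X ω) * ENNReal.ofReal (Y ω) ∂μ ≤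
      ∫⁻ u in Ioo 0 1, ENNReal.ofReal (quantile μ X u) * ENNReal.ofReal (quantile μ Y u) := by
  rw [lintegral_ofReal_mul_ofReal_eq (ae_of_all _ hX0) hX.aemeasurable (ae_of_all _ hY0)
      hY.aemeasurable,
    lintegral_ofReal_mul_ofReal_eq (quantile_nonneg_ae hX hX0) (aemeasurable_quantile hX)
      (quantile_nonneg_ae hY hY0) (aemeasurable_quantile hY)]
  exact lintegral_mono fun s => lintegral_mono fun t =>
    measure_inter_le_restrict_quantile_inter hX hY s t

theorem lintegral_quantile_mul_le_of_tail_le (hX : Measurable X) (hX0 : 0 ≤ X)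
    {g h : ℝ → ℝ≥0∞} (hg : AEMeasurable g (volume.restrict (Ioo 0 1)))
    (hh : AEMeasurable h (volume.restrict (Ioo 0 1))) {c : ℝ≥0∞} (hc : c ≠ ∞)
    (hgh : ∀ α ∈ Ico (0 : ℝ) 1, ∫⁻ u in Ioo α 1, g u ≤ c * ∫⁻ u in Ioo α 1, h u) :
    ∫⁻ u in Ioo 0 1, ENNReal.ofReal (quantile μ X u) * g u ≤
      c * ∫⁻ u in Ioo 0 1, ENNReal.ofReal (quantile μ X u) * h u := by
  rw [lintegral_ofReal_mul_eq_lintegral_setLIntegral (quantile_nonneg_ae hX hX0)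
      (aemeasurable_quantile hX) hg,
    lintegral_ofReal_mul_eq_lintegral_setLIntegral (quantile_nonneg_ae hX hX0)
      (aemeasurable_quantile hX) hh, ← lintegral_const_mul' _ _ hc]
  refine lintegral_mono fun t => ?_
  simp only [Measure.restrict_restrict' measurableSet_Ioo, quantile_tail hX]
  rcases lt_or_ge (μ {ω | X ω ≤ t}).toReal 1 with h1 | h1
  · exact hgh _ ⟨toReal_nonneg, h1⟩
  · simp [Ioo_eq_empty (not_lt.2 h1)]

end Rearrangement

theorem lintegral_Ioo_ofReal_le_of_intervalIntegral_le {f g : ℝ → ℝ}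
    (hf : IntegrableOn f (Ioo 0 1)) (hg : IntegrableOn g (Ioo 0 1))
    (hf0 : ∀ u ∈ Ioo (0 : ℝ) 1, 0 ≤ f u) (hg0 : ∀ u ∈ Ioo (0 : ℝ) 1, 0 ≤ g u) {η : ℝ}
    (hη0 : 0 ≤ η) (hfg : ∀ α ∈ Ico (0 : ℝ) 1, ∫ u in α..1, f u ≤ η * ∫ u in α..1, g u)
    {α : ℝ} (hα : α ∈ Ico (0 : ℝ) 1) :
    ∫⁻ u in Ioo α 1, ENNReal.ofReal (f u) ≤
      ENNReal.ofReal η * ∫⁻ u in Ioo α 1, ENNReal.ofReal (g u) := by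
  have hsub : Ioo α 1 ⊆ Ioo 0 1 := Ioo_subset_Ioo_left hα.1
  have hofReal : ∀ φ : ℝ → ℝ, IntegrableOn φ (Ioo 0 1) → (∀ u ∈ Ioo (0 : ℝ) 1, 0 ≤ φ u) →
      ∫⁻ u in Ioo α 1, ENNReal.ofReal (φ u) = ENNReal.ofReal (∫ u in α..1, φ u) := by
    intro φ hφ hφ0
    rw [intervalIntegral.integral_of_le hα.2.le, integral_Ioc_eq_integral_Ioo,
      ofReal_integral_eq_lintegral_ofReal (hφ.mono_set hsub)
        (ae_restrict_of_forall_mem measurableSet_Ioo fun u hu => hφ0 u (hsub hu))]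
  rw [hofReal f hf hf0, hofReal g hg hg0, ← ofReal_mul hη0]
  exact ofReal_le_ofReal (hfg α hα)

theorem abs_integral_mul_le_toReal_sigmaNorm_mul {Ω : Type*} [MeasurableSpace Ω]
    {μ : Measure Ω} [IsProbabilityMeasure μ] {σ : ℝ → ℝ} (hσ0 : ∀ u ∈ Icc (0 : ℝ) 1, 0 ≤ σ u)
    (hσm : MonotoneOn σ (Icc 0 1)) {Y Z : Ω → ℝ} (hY : Measurable Y)
    (hYσ : sigmaNorm μ σ Y < ⊤) (hZ : Measurable Z) (hZi : Integrable Z μ) {η : ℝ} (hη0 : 0 ≤ η)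
    (hη : ∀ α ∈ Ico (0 : ℝ) 1,
      ∫ u in α..1, quantile μ (fun ω => |Z ω|) u ≤ η * ∫ u in α..1, σ u) :
    |∫ ω, Y ω * Z ω ∂μ| ≤ (sigmaNorm μ σ Y).toReal * η := by
  have hσ0' : ∀ u ∈ Ioo (0 : ℝ) 1, 0 ≤ σ u := fun u hu => hσ0 u (Ioo_subset_Icc_self hu)
  have hσi : IntegrableOn σ (Ioo 0 1) :=
    (hσm.integrableOn_isCompact isCompact_Icc).mono_set Ioo_subset_Icc_self
  have hqZi := integrableOn_quantile hZ.abs (fun ω => abs_nonneg (Z ω)) hZi.abs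
  have hHL := lintegral_mul_le_lintegral_quantile_mul (μ := μ) hY.abs
    (fun ω => abs_nonneg (Y ω)) hZ.abs (fun ω => abs_nonneg (Z ω))
  have hpair := lintegral_quantile_mul_le_of_tail_le (μ := μ) hY.abs (fun ω => abs_nonneg (Y ω))
    hqZi.aemeasurable.ennreal_ofReal hσi.aemeasurable.ennreal_ofReal ofReal_ne_top
    fun α hα => lintegral_Ioo_ofReal_le_of_intervalIntegral_le hqZi hσi
      (fun u hu => quantile_nonneg hZ.abs (fun ω => abs_nonneg (Z ω)) hu) hσ0' hη0 hη hα
  have hnorm : ∫⁻ u in Ioo 0 1, ENNReal.ofReal (quantile μ (fun ω => |Y ω|) u) *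
      ENNReal.ofReal (σ u) = sigmaNorm μ σ Y :=
    setLIntegral_congr_fun measurableSet_Ioo fun u hu => by
      rw [mul_comm, ofReal_mul (hσ0' u hu)]
  calc |∫ ω, Y ω * Z ω ∂μ| ≤ ∫ ω, |Y ω * Z ω| ∂μ := abs_integral_le_integral_abs
    _ = (∫⁻ ω, ENNReal.ofReal |Y ω| * ENNReal.ofReal |Z ω| ∂μ).toReal := by
      rw [integral_eq_lintegral_of_nonneg_ae (ae_of_all _ fun ω => abs_nonneg _)
        (by fun_prop : AEStronglyMeasurable (fun ω => |Y ω * Z ω|) μ)]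
      simp_rw [abs_mul, ofReal_mul (abs_nonneg _)]
    _ ≤ (ENNReal.ofReal η * sigmaNorm μ σ Y).toReal :=
      toReal_mono (mul_ne_top ofReal_ne_top hYσ.ne) (hnorm ▸ hHL.trans hpair)
    _ = (sigmaNorm μ σ Y).toReal * η := by rw [toReal_mul, toReal_ofReal hη0, mul_comm]

theorem stmt17_general {Ω : Type*} [MeasurableSpace Ω] (μ : Measure Ω) [IsProbabilityMeasure μ]
    (σ : ℝ → ℝ) (hσ0 : ∀ u ∈ Set.Icc (0 : ℝ) 1, 0 ≤ σ u)
    (hσm : MonotoneOn σ (Set.Icc (0 : ℝ) 1))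
    (Y : Ω → ℝ) (hYm : Measurable Y) (hYσ : sigmaNorm μ σ Y < ⊤)
    (Z : Ω → ℝ) (hZm : Measurable Z) (hZi : Integrable Z μ)
    (hZfin : ∃ η : ℝ, 0 ≤ η ∧ ∀ α ∈ Set.Ico (0 : ℝ) 1,
      (∫ u in α..1, quantile μ (fun ω => |Z ω|) u) ≤ η * ∫ u in α..1, σ u) :
    |∫ ω, Y ω * Z ω ∂μ| ≤ (sigmaNorm μ σ Y).toReal * sigmaDualNorm μ σ Z := by
  calc |∫ ω, Y ω * Z ω ∂μ|
      ≤ sInf ((sigmaNorm μ σ Y).toReal • {η : ℝ | 0 ≤ η ∧ ∀ α ∈ Set.Ico (0 : ℝ) 1,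
          (∫ u in α..1, quantile μ (fun ω => |Z ω|) u) ≤ η * ∫ u in α..1, σ u}) := by
        refine le_csInf (Set.Nonempty.smul_set hZfin) ?_
        rintro _ ⟨η, ⟨hη0, hη⟩, rfl⟩
        exact abs_integral_mul_le_toReal_sigmaNorm_mul hσ0 hσm hYm hYσ hZm hZi hη0 hη
    _ = (sigmaNorm μ σ Y).toReal * sigmaDualNorm μ σ Z :=
        Real.sInf_smul_of_nonneg toReal_nonneg _

/-- Hölder-type inequality for the σ-norm pairing:
|E[Y·Z]| ≤ ‖Y‖_σ · ‖Z‖_σ*. -/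
theorem stmt17 {Ω : Type*} [MeasurableSpace Ω] (μ : Measure Ω) [IsProbabilityMeasure μ]
    (σ : ℝ → ℝ) (hσ0 : ∀ u ∈ Set.Icc (0 : ℝ) 1, 0 ≤ σ u)
    (hσm : MonotoneOn σ (Set.Icc (0 : ℝ) 1)) (hσmeas : Measurable σ)
    (hσ1 : (∫ u in (0 : ℝ)..1, σ u) = 1)
    (Y : Ω → ℝ) (hYm : Measurable Y) (hYσ : sigmaNorm μ σ Y < ⊤)
    (Z : Ω → ℝ) (hZm : Measurable Z) (hZi : Integrable Z μ)
    (hZfin : ∃ η : ℝ, 0 ≤ η ∧ ∀ α ∈ Set.Ico (0 : ℝ) 1,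
      (∫ u in α..1, quantile μ (fun ω => |Z ω|) u) ≤ η * ∫ u in α..1, σ u) :
    |∫ ω, Y ω * Z ω ∂μ| ≤ (sigmaNorm μ σ Y).toReal * sigmaDualNorm μ σ Z :=
  stmt17_general μ σ hσ0 hσm Y hYm hYσ Z hZm hZi hZfin
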